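/- arXiv:1912.09422 — 2 statements merged into one kernel-verified Lean document; each statement's English description precedes it below -/
import Mathlib

section
/- Let G be a weighted cubic tree with at least 3 leaves, and let i and j be two distinct leaves of G. Then i and j have a common neighbor (i.e., there is a vertex adjacent to both i and j) if and only if there exists a real constant c such that d(i, l) − d(j, l) = c for every leaf l of G distinct from i and j. -/
/-- A weighted cubic tree: a finite connected acyclic simple graph in which every vertex
has degree 1 or 3, with a strictly positive real weight on each edge. -/
structure WCubicTree where
  V : Type
  [fintypeV : Fintype V]
  [decEqV : DecidableEq V]
  G : SimpleGraph V
  [decAdj : DecidableRel G.Adj]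
  connected : G.Connected
  acyclic : G.IsAcyclic
  cubic : ∀ v : V, G.degree v = 1 ∨ G.degree v = 3
  w : Sym2 V → ℝ
  w_pos : ∀ e ∈ G.edgeSet, 0 < w e

attribute [instance] WCubicTree.fintypeV WCubicTree.decEqV WCubicTree.decAdj

/-- A leaf is a vertex of degree 1. -/
def WCubicTree.IsLeaf (T : WCubicTree) (v : T.V) : Prop := T.G.degree v = 1

/-- Some walk between two vertices, which exists by connectedness. -/
noncomputable def WCubicTree.walk (T : WCubicTree) (u v : T.V) : T.G.Walk u v :=
  Classical.choice (T.connected.preconnected u v)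

/-- The distance between two vertices: the sum of the weights of the edges of the
(unique, by acyclicity) path joining them. -/
noncomputable def WCubicTree.dist (T : WCubicTree) (u v : T.V) : ℝ :=
  (((T.walk u v).toPath : T.G.Path u v).val.edges.map T.w).sum

/-!
If `i` and `j` hang off a common vertex `v`, then `d(i, l) - d(j, l) = d(i, v) - d(j, v)` for
every other leaf `l`. Otherwise their neighbours `u ≠ v` both have degree 3, because a third
leaf exists. Leaving `u` by its edge that goes neither to `i` nor towards `v`, a maximal path
ends at a leaf `l₁` with `d(i, l₁) - d(j, l₁) = d(i, u) - d(j, u)`; symmetrically there is a leaf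
`l₂` with difference `d(i, v) - d(j, v)`. These two values differ by `2 d(u, v) > 0`.
-/

open SimpleGraph Walk

lemma Set.exists_mem_ne_ne_of_two_lt_ncard {α : Type*} {s : Set α} (hs : 2 < s.ncard) (a b : α) :
    ∃ x ∈ s, x ≠ a ∧ x ≠ b := by
  by_contra! h
  have hsub : s ⊆ {a, b} := fun x hx => or_iff_not_imp_left.mpr (h x hx)
  have hpair : ({a, b} : Set α).ncard ≤ 2 := (Set.ncard_insert_le a {b}).trans (by simp)
  have := Set.ncard_le_ncard hsub
  omega

namespace SimpleGraph

variable {V : Type*} {G : SimpleGraph V}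

lemma Preconnected.eq_or_eq_of_adj_of_degree_eq_one [G.LocallyFinite] (hG : G.Preconnected)
    {x y : V} (hxy : G.Adj x y) (hx : G.degree x = 1) (hy : G.degree y = 1) (z : V) :
    z = x ∨ z = y := by
  have hclosed {a b : V} (p : G.Walk a b) : a = x ∨ a = y → b = x ∨ b = y := by
    induction p with
    | nil => exact id
    | cons hac p ih =>
      rintro (rfl | rfl)
      · exact ih (.inr ((degree_eq_one_iff_existsUnique_adj.mp hx).unique hac hxy))
      · exact ih (.inl ((degree_eq_one_iff_existsUnique_adj.mp hy).unique hac hxy.symm))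
  exact hclosed (hG x z).some (.inl rfl)

theorem IsAcyclic.exists_isPath_append_degree_eq_one [Fintype V] [G.LocallyFinite]
    (hG : G.IsAcyclic) {s z : V} (p : G.Walk s z) (hp : p.IsPath) (hsz : s ≠ z) :
    ∃ (l : V) (q : G.Walk z l), (p.append q).IsPath ∧ G.degree l = 1 := by
  by_cases hz : G.degree z = 1
  · exact ⟨z, nil, by simpa using hp, hz⟩
  -- every neighbour of `z` on `p` is its predecessor there, so a second neighbour leaves `p`
  obtain ⟨m, hzm, hm⟩ : ∃ m, G.Adj z m ∧ m ∉ p.support := by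
    by_contra! hall
    exact hz <| degree_eq_one_iff_existsUnique_adj.mpr ⟨p.penultimate,
      (p.adj_penultimate (not_nil_of_ne hsz)).symm,
      fun m hzm => hG.eq_penultimate_of_adj_end hp hzm (hall m hzm)⟩
  have hsm : s ≠ m := fun h => hm (h ▸ p.start_mem_support)
  obtain ⟨l, q, hq, hl⟩ := hG.exists_isPath_append_degree_eq_one _ (hp.concat hm hzm) hsm
  exact ⟨l, cons hzm q, by rwa [← concat_append], hl⟩
termination_by Fintype.card V - p.length
decreasing_by
  have := (hp.concat hm hzm).length_lt
  rw [length_concat] at this ⊢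
  omega

end SimpleGraph

namespace WCubicTree

lemma IsLeaf.eq_of_adj {T : WCubicTree} {i a b : T.V} (hi : T.IsLeaf i) (ha : T.G.Adj i a)
    (hb : T.G.Adj i b) : a = b :=
  (degree_eq_one_iff_existsUnique_adj.mp hi).unique ha hb

variable (T : WCubicTree)

lemma dist_eq_of_isPath {u v : T.V} {p : T.G.Walk u v} (hp : p.IsPath) :
    T.dist u v = (p.edges.map T.w).sum := by
  rw [dist, (T.acyclic.subsingleton_path u v).elim (T.walk u v).toPath ⟨p, hp⟩]

lemma dist_comm (u v : T.V) : T.dist u v = T.dist v u := by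
  obtain ⟨p, hp⟩ := T.connected.exists_isPath u v
  rw [T.dist_eq_of_isPath hp, T.dist_eq_of_isPath hp.reverse, edges_reverse, List.map_reverse,
    List.sum_reverse]

lemma dist_pos {u v : T.V} (huv : u ≠ v) : 0 < T.dist u v := by
  obtain ⟨p, hp⟩ := T.connected.exists_isPath u v
  rw [T.dist_eq_of_isPath hp]
  refine List.sum_pos _ ?_ (by simpa [edges_eq_nil] using not_nil_of_ne huv)
  simp only [List.mem_map]
  rintro _ ⟨e, he, rfl⟩
  exact T.w_pos e (p.edges_subset_edgeSet he)

lemma dist_eq_add_of_mem_support {a b z : T.V} {p : T.G.Walk a b} (hp : p.IsPath)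
    (hz : z ∈ p.support) : T.dist a b = T.dist a z + T.dist z b := by
  rw [T.dist_eq_of_isPath hp, T.dist_eq_of_isPath (hp.takeUntil hz),
    T.dist_eq_of_isPath (hp.dropUntil hz), ← List.sum_append, ← List.map_append,
    ← edges_append, take_spec]

lemma dist_eq_add_of_isLeaf {i u l : T.V} (hi : T.IsLeaf i) (hiu : T.G.Adj i u) (hl : l ≠ i) :
    T.dist i l = T.dist i u + T.dist u l := by
  obtain ⟨p, hp⟩ := T.connected.exists_isPath i l
  have hnil : ¬ p.Nil := not_nil_of_ne hl.symm
  refine T.dist_eq_add_of_mem_support hp ?_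
  rw [hi.eq_of_adj hiu (p.adj_snd hnil)]
  exact List.mem_of_mem_tail (p.snd_mem_tail_support hnil)

lemma dist_sub_dist_eq_of_isLeaf {i u j l : T.V} (hi : T.IsLeaf i) (hiu : T.G.Adj i u) (hli : l ≠ i)
    (hjl : T.dist j l = T.dist j u + T.dist u l) :
    T.dist i l - T.dist j l = T.dist i u - T.dist j u := by
  rw [T.dist_eq_add_of_isLeaf hi hiu hli, hjl]
  ring

lemma degree_eq_three_of_adj_isLeaf {i u z : T.V} (hi : T.IsLeaf i) (hiu : T.G.Adj i u)
    (hzi : z ≠ i) (hzu : z ≠ u) : T.G.degree u = 3 :=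
  (T.cubic u).resolve_left fun hu =>
    ((T.connected.preconnected.eq_or_eq_of_adj_of_degree_eq_one hiu hi hu z).elim hzi hzu).elim

lemma exists_isLeaf_dist_sub_dist_eq {i u j : T.V} (hi : T.IsLeaf i) (hiu : T.G.Adj i u)
    (hu : 3 ≤ T.G.degree u) (hju : j ≠ u) :
    ∃ l, T.IsLeaf l ∧ l ≠ i ∧ l ≠ j ∧ T.dist i l - T.dist j l = T.dist i u - T.dist j u := by
  obtain ⟨p, hp⟩ := T.connected.exists_isPath j u
  obtain ⟨b, hub, hbi, hbp⟩ : ∃ b, T.G.Adj u b ∧ b ≠ i ∧ b ≠ p.penultimate := by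
    have hcard : 2 < (T.G.neighborSet u).ncard := by
      rwa [Set.ncard_eq_toFinset_card', ← neighborFinset_def, card_neighborFinset_eq_degree]
    exact Set.exists_mem_ne_ne_of_two_lt_ncard hcard i p.penultimate
  have hbp' : b ∉ p.support := fun h => hbp (T.acyclic.eq_penultimate_of_adj_end hp hub h)
  have hjb : j ≠ b := fun h => hbp' (h ▸ p.start_mem_support)
  obtain ⟨l, q, hP, hl⟩ :=
    T.acyclic.exists_isPath_append_degree_eq_one _ (hp.concat hbp' hub) hjb
  have hu : u ∈ ((p.concat hub).append q).support := by simp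
  have hjl := T.dist_eq_add_of_mem_support hP hu
  have hli : l ≠ i := by
    -- through `b`, the distance from `j` to `i` would exceed the one through `u` by `2 d(u, b)`
    rintro rfl
    have hjb := T.dist_eq_add_of_mem_support (hp.concat hbp' hub)
      (by simp : u ∈ (p.concat hub).support)
    have hbl := T.dist_eq_add_of_mem_support hP
      (by simp : b ∈ ((p.concat hub).append q).support)
    have hib := T.dist_eq_add_of_isLeaf hi hiu hbi
    linarith [T.dist_comm b l, T.dist_comm u l, T.dist_pos hub.ne]
  have hlj : l ≠ j := by
    rintro rfl
    rw [nil_iff_support_eq.mp (isPath_iff_nil.mp hP), List.mem_singleton] at hu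
    exact hju hu.symm
  exact ⟨l, hl, hli, hlj, T.dist_sub_dist_eq_of_isLeaf hi hiu hli hjl⟩

end WCubicTree

/-- In a weighted cubic tree with at least 3 leaves, two distinct leaves `i`, `j` have a
common neighbor iff `d(i,l) - d(j,l)` is constant over all leaves `l` distinct from
`i` and `j`. -/
theorem cherry_iff_constant_difference
    (T : WCubicTree)
    (hleaves : 3 ≤ Set.ncard {v : T.V | T.IsLeaf v})
    (i j : T.V) (hi : T.IsLeaf i) (hj : T.IsLeaf j) (hij : i ≠ j) :
    (∃ v : T.V, T.G.Adj v i ∧ T.G.Adj v j) ↔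
      ∃ c : ℝ, ∀ l : T.V, T.IsLeaf l → l ≠ i → l ≠ j →
        T.dist i l - T.dist j l = c := by
  constructor
  · rintro ⟨v, hvi, hvj⟩
    exact ⟨T.dist i v - T.dist j v, fun l _ hli hlj =>
      T.dist_sub_dist_eq_of_isLeaf hi hvi.symm hli (T.dist_eq_add_of_isLeaf hj hvj.symm hlj)⟩
  rintro ⟨c, hc⟩
  by_contra hno
  obtain ⟨l₀, -, hl₀i, hl₀j⟩ := Set.exists_mem_ne_ne_of_two_lt_ncard hleaves i j
  obtain ⟨u, hiu, -⟩ := degree_eq_one_iff_existsUnique_adj.mp hi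
  obtain ⟨v, hjv, -⟩ := degree_eq_one_iff_existsUnique_adj.mp hj
  have huv : u ≠ v := by rintro rfl; exact hno ⟨u, hiu.symm, hjv.symm⟩
  have hju : j ≠ u := by
    rintro rfl
    exact (T.connected.preconnected.eq_or_eq_of_adj_of_degree_eq_one hiu hi hj l₀).elim hl₀i hl₀j
  have hiv : i ≠ v := by
    rintro rfl
    exact (T.connected.preconnected.eq_or_eq_of_adj_of_degree_eq_one hjv hj hi l₀).elim hl₀j hl₀i
  have hu := T.degree_eq_three_of_adj_isLeaf hi hiu hij.symm hju
  have hv := T.degree_eq_three_of_adj_isLeaf hj hjv hij hiv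
  obtain ⟨l₁, hl₁, hl₁i, hl₁j, hdiff₁⟩ := T.exists_isLeaf_dist_sub_dist_eq hi hiu hu.ge hju
  obtain ⟨l₂, hl₂, hl₂j, hl₂i, hdiff₂⟩ := T.exists_isLeaf_dist_sub_dist_eq hj hjv hv.ge hiv
  have hju' := T.dist_eq_add_of_isLeaf hj hjv hju.symm
  have hiv' := T.dist_eq_add_of_isLeaf hi hiu hiv.symm
  linarith [hc l₁ hl₁ hl₁i hl₁j, hc l₂ hl₂ hl₂i hl₂j, T.dist_pos huv, T.dist_pos huv.symm]
end

section
/- Let n ≥ 1, let T ∈ ℝⁿ, and suppose a set Δ ⊆ ℝⁿ is the union of finitely many open simplicial cones C r (r ranging over a finite index set), where C r is spanned with positive coefficients by a basis vʳ : Fin n → ℝⁿ of ℝⁿ, the cones C r are pairwise disjoint, the difference Δ \ (⋃ᵣ C r) has Lebesgue measure zero, and ⟨vʳ i, T⟩ > 0 for all r and i. Then the integral over Δ of F ↦ exp(−⟨F, T⟩) with respect to Lebesgue measure equals Σᵣ |det Mʳ| / Πᵢ ⟨vʳ i, T⟩, where Mʳ is the matrix whose rows are the vectors vʳ i. -/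
/-!
Writing `β ↦ ∑ i, β i • v i` as the matrix `Mᵀ` acting on coordinates, each open simplicial cone
is the image of the positive orthant under a linear map of determinant `det M`. The change of
variables formula turns the integral over the cone into `|det M|` times an integral over the
orthant, where `exp (-⟪F, T⟫)` factors as `∏ i, exp (-⟪v i, T⟫ * β i)`; by Fubini this is
`∏ i, ⟪v i, T⟫⁻¹`. Since the cones are disjoint and cover `Δ` up to a null set, the integral over
`Δ` is the sum of the integrals over the cones.
-/

open MeasureTheory Set Matrix
open scoped RealInnerProductSpace

theorem integral_Ioi_zero_exp_neg_mul {c : ℝ} (hc : 0 < c) :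
    ∫ t in Ioi (0 : ℝ), Real.exp (-(c * t)) = c⁻¹ := by
  have := integral_exp_mul_Ioi (neg_neg_of_pos hc) 0
  simpa only [neg_mul, mul_zero, neg_zero, Real.exp_zero, div_neg, neg_div, neg_neg,
    one_div] using this

section Orthant

variable {κ : Type*} [Fintype κ]

theorem integral_orthant_prod_exp_neg_mul (c : κ → ℝ) (hc : ∀ i, 0 < c i) :
    ∫ y in univ.pi (fun _ => Ioi (0 : ℝ)), ∏ i, Real.exp (-(c i * y i)) = ∏ i, (c i)⁻¹ := by
  rw [volume_pi, Measure.restrict_pi_pi,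
    integral_fintype_prod_eq_prod (fun i y => Real.exp (-(c i * y)))]
  exact Finset.prod_congr rfl fun i _ => integral_Ioi_zero_exp_neg_mul (hc i)

variable [DecidableEq κ]

theorem toLin'_injective_of_det_ne_zero {A : Matrix κ κ ℝ} (hA : A.det ≠ 0) :
    Function.Injective (toLin' A) :=
  mulVec_injective_iff_isUnit.2 ((isUnit_iff_isUnit_det A).2 hA.isUnit)

theorem integral_image_orthant_exp_neg_dotProduct (A : Matrix κ κ ℝ) (hA : A.det ≠ 0)
    (t : κ → ℝ) (ht : ∀ i, 0 < (Aᵀ *ᵥ t) i) :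
    ∫ x in toLin' A '' univ.pi (fun _ => Ioi 0), Real.exp (-(x ⬝ᵥ t))
      = |A.det| / ∏ i, (Aᵀ *ᵥ t) i := by
  rw [integral_image_eq_integral_abs_det_fderiv_smul volume (f := toLin' A)
    (MeasurableSet.univ_pi fun _ => measurableSet_Ioi)
    (fun x _ => (toLin' A).toContinuousLinearMap.hasFDerivAt.hasFDerivWithinAt)
    (toLin'_injective_of_det_ne_zero hA).injOn]
  have hexp : ∀ x : κ → ℝ,
      Real.exp (-(toLin' A x ⬝ᵥ t)) = ∏ i, Real.exp (-((Aᵀ *ᵥ t) i * x i)) := by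
    intro x
    rw [← Real.exp_sum, Finset.sum_neg_distrib, toLin'_apply, dotProduct_comm,
      dotProduct_mulVec, ← mulVec_transpose]
    rfl
  simp only [ContinuousLinearMap.det, LinearMap.coe_toContinuousLinearMap, LinearMap.det_toLin',
    hexp, smul_eq_mul]
  rw [integral_const_mul, integral_orthant_prod_exp_neg_mul _ ht, Finset.prod_inv_distrib,
    div_eq_mul_inv]

end Orthant

section OpenSimplicialCone

variable {κ : Type*} [Fintype κ]

def openSimplicialCone {E : Type*} [AddCommMonoid E] [Module ℝ E] (v : κ → E) : Set E :=
  {F | ∃ β : κ → ℝ, (∀ i, 0 < β i) ∧ F = ∑ i, β i • v i}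

variable [DecidableEq κ]

theorem det_of_ne_zero_of_linearIndependent {v : κ → EuclideanSpace ℝ κ}
    (hv : LinearIndependent ℝ v) : (Matrix.of fun i j => v i j).det ≠ 0 := by
  rw [← isUnit_iff_ne_zero, ← isUnit_iff_isUnit_det, ← linearIndependent_rows_iff_isUnit]
  exact hv.map' (WithLp.linearEquiv 2 ℝ (κ → ℝ)).toLinearMap (LinearEquiv.ker _)

theorem openSimplicialCone_eq_preimage (v : κ → EuclideanSpace ℝ κ) :
    openSimplicialCone v
      = WithLp.ofLp ⁻¹' (toLin' (Matrix.of fun i j => v i j)ᵀ '' univ.pi fun _ => Ioi 0) := by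
  have hcoord : ∀ β : κ → ℝ,
      WithLp.ofLp (∑ i, β i • v i) = (Matrix.of fun i j => v i j)ᵀ *ᵥ β := by
    intro β
    ext j
    simp [mulVec, dotProduct, mul_comm]
  ext F
  constructor
  · rintro ⟨β, hβ, rfl⟩
    exact ⟨β, fun i _ => hβ i, (hcoord β).symm⟩
  · rintro ⟨β, hβ, hF⟩
    refine ⟨β, fun i => hβ i (mem_univ i), ?_⟩
    apply WithLp.ofLp_injective 2
    rw [← hF, toLin'_apply, hcoord]

theorem measurableSet_openSimplicialCone {v : κ → EuclideanSpace ℝ κ}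
    (hv : LinearIndependent ℝ v) : MeasurableSet (openSimplicialCone v) := by
  have hdet : (Matrix.of fun i j => v i j)ᵀ.det ≠ 0 := by
    rw [det_transpose]
    exact det_of_ne_zero_of_linearIndependent hv
  rw [openSimplicialCone_eq_preimage]
  exact (MeasurableEquiv.toLp 2 (κ → ℝ)).symm.measurable
    ((MeasurableSet.univ_pi fun _ => measurableSet_Ioi).image_of_continuousOn_injOn
      (toLin' (Matrix.of fun i j => v i j)ᵀ).continuous_of_finiteDimensional.continuousOn
      (toLin'_injective_of_det_ne_zero hdet).injOn)

theorem integral_exp_neg_inner_openSimplicialCone (T : EuclideanSpace ℝ κ)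
    {v : κ → EuclideanSpace ℝ κ} (hv : LinearIndependent ℝ v) (hT : ∀ i, 0 < ⟪v i, T⟫) :
    ∫ F in openSimplicialCone v, Real.exp (-⟪F, T⟫)
      = |(Matrix.of fun i j => v i j).det| / ∏ i, ⟪v i, T⟫ := by
  have hinner : ∀ F : EuclideanSpace ℝ κ, ⟪F, T⟫ = WithLp.ofLp F ⬝ᵥ WithLp.ofLp T := by
    intro F
    simp [EuclideanSpace.inner_eq_star_dotProduct, dotProduct_comm]
  have hc : (Matrix.of fun i j => v i j)ᵀᵀ *ᵥ WithLp.ofLp T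
      = fun i => WithLp.ofLp (v i) ⬝ᵥ WithLp.ofLp T := by
    rw [transpose_transpose]
    rfl
  have hdet : (Matrix.of fun i j => v i j)ᵀ.det ≠ 0 := by
    rw [det_transpose]
    exact det_of_ne_zero_of_linearIndependent hv
  simp only [hinner] at hT ⊢
  rw [openSimplicialCone_eq_preimage, (PiLp.volume_preserving_ofLp κ).setIntegral_preimage_emb
    (MeasurableEquiv.toLp 2 (κ → ℝ)).symm.measurableEmbedding
    (fun x => Real.exp (-(x ⬝ᵥ WithLp.ofLp T))),
    integral_image_orthant_exp_neg_dotProduct _ hdet _ (by rw [hc]; exact hT), hc, det_transpose]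

theorem integrableOn_exp_neg_inner_openSimplicialCone (T : EuclideanSpace ℝ κ)
    {v : κ → EuclideanSpace ℝ κ} (hv : LinearIndependent ℝ v) (hT : ∀ i, 0 < ⟪v i, T⟫) :
    IntegrableOn (fun F => Real.exp (-⟪F, T⟫)) (openSimplicialCone v) := by
  -- a non-integrable function has Bochner integral `0`
  refine Integrable.of_integral_ne_zero ?_
  rw [integral_exp_neg_inner_openSimplicialCone T hv hT]
  exact div_ne_zero (abs_ne_zero.2 (det_of_ne_zero_of_linearIndependent hv))
    (Finset.prod_ne_zero_iff.2 fun i _ => (hT i).ne')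

end OpenSimplicialCone

theorem setIntegral_eq_sum_of_ae_iUnion {X E ι : Type*} [MeasurableSpace X] {μ : Measure X}
    [NormedAddCommGroup E] [NormedSpace ℝ E] [Fintype ι] {f : X → E} {s : Set X}
    {t : ι → Set X} (hts : ∀ i, t i ⊆ s) (hnull : μ (s \ ⋃ i, t i) = 0)
    (ht : ∀ i, MeasurableSet (t i)) (hdisj : Pairwise (Function.onFun Disjoint t))
    (hf : ∀ i, IntegrableOn f (t i) μ) :
    ∫ x in s, f x ∂μ = ∑ i, ∫ x in t i, f x ∂μ := by
  have hae : s =ᵐ[μ] ⋃ i, t i := by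
    rw [ae_eq_set, sdiff_eq_empty.2 (iUnion_subset hts)]
    exact ⟨hnull, measure_empty⟩
  rw [setIntegral_congr_set hae, integral_iUnion_fintype ht hdisj hf]

theorem integral_exp_over_triangulated_cone_general
    (n : ℕ) (ι : Type) [Fintype ι]
    (T : EuclideanSpace ℝ (Fin n))
    (v : ι → Fin n → EuclideanSpace ℝ (Fin n))
    (hv : ∀ r, LinearIndependent ℝ (v r))
    (C : ι → Set (EuclideanSpace ℝ (Fin n)))
    (hC : ∀ r, C r = {F : EuclideanSpace ℝ (Fin n) |
      ∃ β : Fin n → ℝ, (∀ i, 0 < β i) ∧ F = ∑ i, β i • v r i})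
    (Δ : Set (EuclideanSpace ℝ (Fin n)))
    (hsub : ∀ r, C r ⊆ Δ)
    (hdisj : Pairwise (Function.onFun Disjoint C))
    (hnull : volume (Δ \ ⋃ r, C r) = 0)
    (hT : ∀ r i, 0 < ⟪v r i, T⟫) :
    (∫ F in Δ, Real.exp (-⟪F, T⟫))
      = ∑ r, |(Matrix.of fun i j => v r i j).det| / ∏ i, ⟪v r i, T⟫ := by
  have hcone : ∀ r, C r = openSimplicialCone (v r) := hC
  rw [setIntegral_eq_sum_of_ae_iUnion hsub hnull
    (fun r => hcone r ▸ measurableSet_openSimplicialCone (hv r)) hdisj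
    (fun r => hcone r ▸ integrableOn_exp_neg_inner_openSimplicialCone T (hv r) (hT r))]
  exact Finset.sum_congr rfl fun r _ =>
    hcone r ▸ integral_exp_neg_inner_openSimplicialCone T (hv r) (hT r)

/-- If `Δ ⊆ ℝⁿ` is, up to a Lebesgue-null set, the disjoint union of finitely many open
simplicial cones `C r` spanned by bases `v r` with `⟪v r i, T⟫ > 0`, then the integral of
`exp (-⟪F, T⟫)` over `Δ` is the sum over `r` of `|det Mʳ| / ∏ i, ⟪v r i, T⟫`. -/
theorem integral_exp_over_triangulated_cone
    (n : ℕ) (hn : 1 ≤ n) (ι : Type) [Fintype ι]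
    (T : EuclideanSpace ℝ (Fin n))
    (v : ι → Fin n → EuclideanSpace ℝ (Fin n))
    (hv : ∀ r, LinearIndependent ℝ (v r))
    (C : ι → Set (EuclideanSpace ℝ (Fin n)))
    (hC : ∀ r, C r = {F : EuclideanSpace ℝ (Fin n) |
      ∃ β : Fin n → ℝ, (∀ i, 0 < β i) ∧ F = ∑ i, β i • v r i})
    (Δ : Set (EuclideanSpace ℝ (Fin n)))
    (hsub : ∀ r, C r ⊆ Δ)
    (hdisj : Pairwise (Function.onFun Disjoint C))
    (hnull : volume (Δ \ ⋃ r, C r) = 0)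
    (hT : ∀ r i, 0 < ⟪v r i, T⟫) :
    (∫ F in Δ, Real.exp (-⟪F, T⟫))
      = ∑ r, |(Matrix.of fun i j => v r i j).det| / ∏ i, ⟪v r i, T⟫ :=
  integral_exp_over_triangulated_cone_general n ι T v hv C hC Δ hsub hdisj hnull hT
end
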